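/- arXiv:2505.14463 — 4 statements merged into one kernel-verified Lean document; each statement's English description precedes it below -/
import Mathlib

section
/- Let A be an n×n real Hurwitz matrix and let N be any n×n real matrix. Then the function σ ↦ exp(σ·Aᵀ)·N·exp(σ·A) is integrable on [0, ∞), and the matrix P := ∫₀^∞ exp(σ·Aᵀ)·N·exp(σ·A) dσ satisfies P·A + Aᵀ·P = −N. -/
open scoped Matrix
open MeasureTheory

section Aux
open NormedSpace Polynomial Matrix Filter
attribute [local instance] Matrix.linftyOpNormedAddCommGroup Matrix.linftyOpNormedRing
  Matrix.linftyOpNormedAlgebra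

variable {n : ℕ}

lemma exp_mem_aeval_range (B : Matrix (Fin n) (Fin n) ℂ) :
    exp B ∈ (Polynomial.aeval (R := ℂ) B).range := by
  have h1 : IsClosed ((Subalgebra.toSubmodule (Polynomial.aeval (R := ℂ) B).range : Submodule ℂ _) : Set (Matrix (Fin n) (Fin n) ℂ)) :=
    Submodule.closed_of_finiteDimensional _
  have h2 : HasSum (fun k : ℕ => (k.factorial : ℂ)⁻¹ • B ^ k) (exp B) := by
    rw [exp_eq_tsum ℂ]
    exact (expSeries_summable' (𝕂 := ℂ) B).hasSum
  have h3 : ∀ s : Finset ℕ, ∑ k ∈ s, (k.factorial : ℂ)⁻¹ • B ^ k ∈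
      (Subalgebra.toSubmodule (Polynomial.aeval (R := ℂ) B).range : Submodule ℂ _) := by
    intro s
    refine Submodule.sum_mem _ fun k _ => Submodule.smul_mem _ _ ?_
    exact ⟨X ^ k, by simp⟩
  exact h1.mem_of_tendsto h2.tendsto_sum_nat (Filter.Eventually.of_forall fun N => h3 _)

noncomputable def mulVecCLM (v : Fin n → ℂ) :
    Matrix (Fin n) (Fin n) ℂ →L[ℂ] (Fin n → ℂ) :=
  LinearMap.toContinuousLinearMap
    { toFun := (· *ᵥ v)
      map_add' := fun M N => Matrix.add_mulVec M N v
      map_smul' := fun c M => Matrix.smul_mulVec c M v }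

lemma pow_mulVec_eigen {B : Matrix (Fin n) (Fin n) ℂ} {μ : ℂ} {v : Fin n → ℂ}
    (hBv : B *ᵥ v = μ • v) (k : ℕ) : B ^ k *ᵥ v = μ ^ k • v := by
  induction k with
  | zero => simp
  | succ k ih =>
      rw [pow_succ, ← Matrix.mulVec_mulVec, hBv, Matrix.mulVec_smul, ih, smul_smul,
        pow_succ, mul_comm]

lemma exp_mulVec_eigen {B : Matrix (Fin n) (Fin n) ℂ} {μ : ℂ} {v : Fin n → ℂ}
    (hBv : B *ᵥ v = μ • v) : exp B *ᵥ v = Complex.exp μ • v := by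
  have hsum : Summable fun k : ℕ => (k.factorial : ℂ)⁻¹ • B ^ k :=
    expSeries_summable' (𝕂 := ℂ) B
  have : exp B *ᵥ v = mulVecCLM v (∑' k : ℕ, (k.factorial : ℂ)⁻¹ • B ^ k) := by
    rw [exp_eq_tsum ℂ]; rfl
  rw [this, (mulVecCLM v).map_tsum hsum]
  have heval : ∀ k : ℕ, mulVecCLM v ((k.factorial : ℂ)⁻¹ • B ^ k)
      = ((k.factorial : ℂ)⁻¹ * μ ^ k) • v := by
    intro k
    rw [_root_.map_smul]
    show (k.factorial : ℂ)⁻¹ • (B ^ k *ᵥ v) = _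
    rw [pow_mulVec_eigen hBv, smul_smul]
  simp_rw [heval]
  rw [Summable.tsum_smul_const]
  · congr 1
    rw [Complex.exp_eq_exp_ℂ, exp_eq_tsum ℂ]
    simp [smul_eq_mul]
  · simpa [smul_eq_mul] using expSeries_summable' (𝕂 := ℂ) (μ : ℂ)

lemma aeval_mulVec_eigen {B : Matrix (Fin n) (Fin n) ℂ} {μ : ℂ} {v : Fin n → ℂ}
    (hBv : B *ᵥ v = μ • v) (p : ℂ[X]) :
    (Polynomial.aeval (R := ℂ) B) p *ᵥ v = p.eval μ • v := by
  have : (Polynomial.aeval (R := ℂ) B) p *ᵥ v = mulVecCLM v ((Polynomial.aeval (R := ℂ) B) p) := rfl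
  rw [this, Polynomial.aeval_eq_sum_range, map_sum]
  have heval : ∀ k ∈ Finset.range (p.natDegree + 1),
      mulVecCLM v (p.coeff k • B ^ k) = (p.coeff k * μ ^ k) • v := by
    intro k _
    rw [_root_.map_smul]
    show p.coeff k • (B ^ k *ᵥ v) = _
    rw [pow_mulVec_eigen hBv, smul_smul]
  rw [Finset.sum_congr rfl heval, ← Finset.sum_smul, Polynomial.eval_eq_sum_range]

lemma spectrum_exp (hn : 0 < n) (B : Matrix (Fin n) (Fin n) ℂ) :
    spectrum ℂ (exp B) = Complex.exp '' spectrum ℂ B := by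
  have : Nonempty (Fin n) := Fin.pos_iff_nonempty.mp hn
  obtain ⟨p, hp'⟩ := exp_mem_aeval_range B
  have hp : (Polynomial.aeval (R := ℂ) B) p = exp B := hp'
  have hnonempty : (spectrum ℂ B).Nonempty := spectrum.nonempty B
  have hmap := spectrum.map_polynomial_aeval_of_nonempty B p hnonempty
  rw [hp] at hmap
  rw [hmap]
  apply Set.image_congr
  intro μ hμ
  have hEig : Module.End.HasEigenvalue (Matrix.toLinAlgEquiv' B : Module.End ℂ (Fin n → ℂ)) μ := by
    rw [Module.End.hasEigenvalue_iff_mem_spectrum, AlgEquiv.spectrum_eq]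
    exact hμ
  obtain ⟨v, hv⟩ := hEig.exists_hasEigenvector
  have hBv : B *ᵥ v = μ • v := hv.apply_eq_smul
  have h1 : p.eval μ • v = Complex.exp μ • v := by
    rw [← aeval_mulVec_eigen hBv p, hp, exp_mulVec_eigen hBv]
  have := sub_eq_zero.mpr h1
  rw [← sub_smul, smul_eq_zero] at this
  rcases this with h | h
  · exact sub_eq_zero.mp h
  · exact absurd h hv.right


lemma spectralRadius_exp_lt_one (hn : 0 < n) (B : Matrix (Fin n) (Fin n) ℂ)
    (hB : ∀ μ ∈ spectrum ℂ B, μ.re < 0)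
    (hspec : spectrum ℂ (exp B) = Complex.exp '' spectrum ℂ B) :
    spectralRadius ℂ (exp B) < 1 := by
  have : Nonempty (Fin n) := Fin.pos_iff_nonempty.mp hn
  have hne : (spectrum ℂ (exp B)).Nonempty := spectrum.nonempty _
  obtain ⟨z₀, hz₀S, hmax⟩ := (spectrum.isCompact (exp B)).exists_isMaxOn hne
    continuous_norm.continuousOn
  have hz₀ : ‖z₀‖ < 1 := by
    rw [hspec] at hz₀S
    obtain ⟨μ, hμ, rfl⟩ := hz₀S
    rw [Complex.norm_exp]
    rw [Real.exp_lt_one_iff]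
    exact hB μ hμ
  calc spectralRadius ℂ (exp B) ≤ (‖z₀‖₊ : ENNReal) := by
        refine iSup₂_le fun μ hμ => ?_
        exact_mod_cast hmax hμ
    _ < 1 := by
        rw [← ENNReal.coe_one, ENNReal.coe_lt_coe]
        exact_mod_cast hz₀

lemma exists_geom_bound (hn : 0 < n) (B : Matrix (Fin n) (Fin n) ℂ)
    (h1 : spectralRadius ℂ (exp B) < 1) :
    ∃ ρ : ℝ, 0 < ρ ∧ ρ < 1 ∧ ∃ C : ℝ, 0 < C ∧
      ∀ k : ℕ, ‖(exp B) ^ k‖ ≤ C * ρ ^ k := by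
  set E := exp B with hE
  have htop : spectralRadius ℂ E ≠ ⊤ := h1.trans_le le_top |>.ne
  set r : ℝ := (spectralRadius ℂ E).toReal with hr
  have hr0 : 0 ≤ r := ENNReal.toReal_nonneg
  have hr1 : r < 1 := by
    rw [hr, ← ENNReal.toReal_one]
    exact ENNReal.toReal_strict_mono (by simp) h1
  set ρ : ℝ := (r + 1) / 2 with hρ
  have hρ0 : 0 < ρ := by positivity
  have hρ1 : ρ < 1 := by rw [hρ]; linarith
  have hrρ : r < ρ := by rw [hρ]; linarith
  refine ⟨ρ, hρ0, hρ1, ?_⟩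
  have htend := spectrum.pow_norm_pow_one_div_tendsto_nhds_spectralRadius E
  have hlt : spectralRadius ℂ E < ENNReal.ofReal ρ :=
    (ENNReal.lt_ofReal_iff_toReal_lt htop).mpr hrρ
  have hev : ∀ᶠ k : ℕ in atTop, ENNReal.ofReal (‖E ^ k‖ ^ (1 / (k:ℝ))) < ENNReal.ofReal ρ :=
    htend.eventually_lt_const hlt
  obtain ⟨N₀, hN₀⟩ := hev.exists_forall_of_atTop
  set N := max N₀ 1 with hN
  have hbound : ∀ k : ℕ, N ≤ k → ‖E ^ k‖ ≤ ρ ^ k := by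
    intro k hk
    have hk1 : 1 ≤ k := le_trans (le_max_right _ _) hk
    have := hN₀ k (le_trans (le_max_left _ _) hk)
    have hlt' : ‖E ^ k‖ ^ (1 / (k:ℝ)) < ρ :=
      (ENNReal.ofReal_lt_ofReal_iff hρ0).mp this
    have hnn : (0:ℝ) ≤ ‖E ^ k‖ ^ (1 / (k:ℝ)) := Real.rpow_nonneg (norm_nonneg _) _
    have hpow := pow_lt_pow_left₀ hlt' hnn (by omega : k ≠ 0)
    have heq : (‖E ^ k‖ ^ (1 / (k:ℝ))) ^ k = ‖E ^ k‖ := by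
      rw [← Real.rpow_natCast (‖E ^ k‖ ^ (1 / (k:ℝ))) k, ← Real.rpow_mul (norm_nonneg _),
        one_div_mul_cancel (by exact_mod_cast (by omega : 0 < k).ne' : (k:ℝ) ≠ 0), Real.rpow_one]
    rw [heq] at hpow
    exact hpow.le
  classical
  set C : ℝ := 1 + ∑ k ∈ Finset.range (N + 1), ‖E ^ k‖ / ρ ^ k with hC
  have hCpos : 0 < C := by
    have h0 : 0 ≤ ∑ k ∈ Finset.range (N + 1), ‖E ^ k‖ / ρ ^ k :=
      Finset.sum_nonneg fun k _ => div_nonneg (norm_nonneg _) (by positivity)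
    rw [hC]; linarith
  refine ⟨C, hCpos, fun k => ?_⟩
  rcases le_or_gt N k with hk | hk
  · calc ‖E ^ k‖ ≤ ρ ^ k := hbound k hk
      _ ≤ C * ρ ^ k := by
          have h1C : 1 ≤ C := by
            rw [hC]
            have : 0 ≤ ∑ k ∈ Finset.range (N + 1), ‖E ^ k‖ / ρ ^ k :=
              Finset.sum_nonneg fun k _ => div_nonneg (norm_nonneg _) (by positivity)
            linarith
          nlinarith [pow_pos hρ0 k]
  · have hmem : k ∈ Finset.range (N + 1) := Finset.mem_range.mpr (by omega)
    have h1' : ‖E ^ k‖ / ρ ^ k ≤ ∑ j ∈ Finset.range (N + 1), ‖E ^ j‖ / ρ ^ j :=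
      Finset.single_le_sum (fun j _ => div_nonneg (norm_nonneg _) (by positivity)) hmem
    have h2' : ‖E ^ k‖ / ρ ^ k ≤ C := by rw [hC]; linarith
    calc ‖E ^ k‖ = (‖E ^ k‖ / ρ ^ k) * ρ ^ k := by field_simp
      _ ≤ C * ρ ^ k := mul_le_mul_of_nonneg_right h2' (by positivity)

lemma norm_exp_smul_decay (hn : 0 < n) (B : Matrix (Fin n) (Fin n) ℂ)
    (hB : ∀ μ ∈ spectrum ℂ B, μ.re < 0)
    (hspec : spectrum ℂ (exp B) = Complex.exp '' spectrum ℂ B) :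
    ∃ C : ℝ, 0 < C ∧ ∃ α : ℝ, 0 < α ∧ ∀ t : ℝ, 0 ≤ t →
      ‖exp (t • B)‖ ≤ C * Real.exp (-α * t) := by
  obtain ⟨ρ, hρ0, hρ1, C₀, hC₀, hpow⟩ :=
    exists_geom_bound hn B (spectralRadius_exp_lt_one hn B hB hspec)
  -- bound on [0,1]
  have hcont : Continuous fun s : ℝ => exp (s • B) :=
    exp_continuous.comp (continuous_id.smul continuous_const)
  obtain ⟨M₀, hM₀⟩ := (isCompact_Icc (a := (0:ℝ)) (b := 1)).exists_bound_of_continuousOn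
    hcont.continuousOn
  set M : ℝ := max M₀ 1 with hM
  have hM1 : (1:ℝ) ≤ M := le_max_right _ _
  have hMpos : (0:ℝ) < M := lt_of_lt_of_le one_pos hM1
  set α : ℝ := -Real.log ρ with hα
  have hαpos : 0 < α := by
    rw [hα, neg_pos]
    exact Real.log_neg hρ0 hρ1
  refine ⟨C₀ * M / ρ, by positivity, α, hαpos, fun t ht => ?_⟩
  set m : ℕ := ⌊t⌋₊ with hm
  set s : ℝ := t - m with hs
  have hs0 : 0 ≤ s := by
    rw [hs]; simp only [sub_nonneg]; exact Nat.floor_le ht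
  have hs1 : s ≤ 1 := by
    rw [hs]
    have := Nat.lt_floor_add_one t
    linarith
  have hsplit : t • B = (m : ℝ) • B + s • B := by
    rw [← add_smul]; congr 1; rw [hs]; ring
  have hcomm : Commute ((m : ℝ) • B) (s • B) :=
    ((Commute.refl B).smul_left _).smul_right _
  have hexp : exp (t • B) = exp ((m : ℝ) • B) * exp (s • B) := by
    rw [hsplit, Matrix.exp_add_of_commute _ _ hcomm]
  have hfpow : exp ((m : ℝ) • B) = (exp B) ^ m := by
    rw [Nat.cast_smul_eq_nsmul, Matrix.exp_nsmul]
  have hnorm1 : ‖exp ((m : ℝ) • B)‖ ≤ C₀ * ρ ^ m := by rw [hfpow]; exact hpow m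
  have hnorm2 : ‖exp (s • B)‖ ≤ M :=
    le_trans (hM₀ s ⟨hs0, hs1⟩) (le_max_left _ _)
  have hρm : ρ ^ m ≤ Real.exp α * Real.exp (-α * t) := by
    have h1 : (ρ : ℝ) ^ (m : ℕ) = ρ ^ ((m : ℝ) : ℝ) := by
      rw [Real.rpow_natCast]
    have h2 : ρ ^ ((m : ℝ)) ≤ ρ ^ (t - 1 : ℝ) := by
      refine Real.rpow_le_rpow_of_exponent_ge hρ0 hρ1.le ?_
      have := Nat.lt_floor_add_one t
      rw [hm]; push_cast; linarith [Nat.lt_floor_add_one t]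
    have h3 : (ρ : ℝ) ^ (t - 1 : ℝ) = Real.exp (Real.log ρ * (t - 1)) := by
      rw [Real.rpow_def_of_pos hρ0]
    have h4 : Real.exp (Real.log ρ * (t - 1)) = Real.exp α * Real.exp (-α * t) := by
      rw [← Real.exp_add]; congr 1; rw [hα]; ring
    calc (ρ:ℝ) ^ m = ρ ^ ((m:ℝ):ℝ) := h1
      _ ≤ ρ ^ (t - 1 : ℝ) := h2
      _ = Real.exp α * Real.exp (-α * t) := h3.trans h4
  have hρα : Real.exp α = ρ⁻¹ := by
    rw [hα, Real.exp_neg, Real.exp_log hρ0]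
  calc ‖exp (t • B)‖ ≤ ‖exp ((m : ℝ) • B)‖ * ‖exp (s • B)‖ := by
        rw [hexp]; exact norm_mul_le _ _
    _ ≤ (C₀ * ρ ^ m) * M := by
        apply mul_le_mul hnorm1 hnorm2 (norm_nonneg _)
        positivity
    _ ≤ (C₀ * (Real.exp α * Real.exp (-α * t))) * M := by
        have := mul_le_mul_of_nonneg_left hρm hC₀.le
        nlinarith
    _ = C₀ * M / ρ * Real.exp (-α * t) := by
        rw [hρα]; field_simp

lemma entry_norm_le (M : Matrix (Fin n) (Fin n) ℂ) (i j : Fin n) : ‖M i j‖ ≤ ‖M‖ := by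
  have h1 : ‖M i j‖₊ ≤ ∑ k, ‖M i k‖₊ := by
    refine Finset.single_le_sum (f := fun k => ‖M i k‖₊) (fun k _ => ?_) (Finset.mem_univ j)
    positivity
  have h2 : (∑ k, ‖M i k‖₊) ≤ ‖M‖₊ := by
    rw [Matrix.linfty_opNNNorm_def]
    exact Finset.le_sup (f := fun i => ∑ k, ‖M i k‖₊) (Finset.mem_univ i)
  exact_mod_cast h1.trans h2

lemma map_exp_smul (A : Matrix (Fin n) (Fin n) ℝ) (t : ℝ) :
    (exp (t • A)).map Complex.ofReal = exp (t • A.map Complex.ofReal) := by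
  have hf : Continuous fun M : Matrix (Fin n) (Fin n) ℝ => M.map (Complex.ofReal : ℝ → ℂ) :=
    continuous_matrix fun i j =>
      Complex.continuous_ofReal.comp ((continuous_apply j).comp (continuous_apply i))
  have := map_exp (Complex.ofRealHom.mapMatrix
    (m := Fin n)) hf (t • A)
  have h2 : Complex.ofRealHom.mapMatrix (t • A) = t • A.map Complex.ofReal := by
    ext i j
    simp [Matrix.map_apply, Complex.real_smul]
  rw [h2] at this
  exact this

lemma spectrum_transpose (M : Matrix (Fin n) (Fin n) ℂ) : spectrum ℂ Mᵀ = spectrum ℂ M := by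
  ext μ
  simp only [spectrum.mem_iff, not_iff_not]
  have h : algebraMap ℂ (Matrix (Fin n) (Fin n) ℂ) μ - Mᵀ =
      (algebraMap ℂ (Matrix (Fin n) (Fin n) ℂ) μ - M)ᵀ := by
    rw [Matrix.transpose_sub]
    congr 1
    simp [Matrix.algebraMap_eq_diagonal]
  rw [h, Matrix.isUnit_iff_isUnit_det, Matrix.det_transpose, ← Matrix.isUnit_iff_isUnit_det]

lemma exp_entry_decay (A : Matrix (Fin n) (Fin n) ℝ)
    (hA : ∀ μ ∈ spectrum ℂ (A.map Complex.ofReal), μ.re < 0) :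
    ∃ C : ℝ, 0 < C ∧ ∃ α : ℝ, 0 < α ∧ ∀ t : ℝ, 0 ≤ t → ∀ i j,
      |exp (t • A) i j| ≤ C * Real.exp (-α * t) := by
  rcases Nat.eq_zero_or_pos n with rfl | hn
  · exact ⟨1, one_pos, 1, one_pos, fun t ht i => i.elim0⟩
  · set B := A.map Complex.ofReal with hB
    obtain ⟨C, hC, α, hα, hdecay⟩ := norm_exp_smul_decay hn B hA (spectrum_exp hn B)
    refine ⟨C, hC, α, hα, fun t ht i j => ?_⟩
    have h1 : |exp (t • A) i j| = ‖((exp (t • A)).map Complex.ofReal) i j‖ := by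
      simp [Matrix.map_apply, Complex.norm_real, Real.norm_eq_abs]
    rw [h1, map_exp_smul]
    exact (entry_norm_le _ i j).trans (hdecay t ht)

lemma continuous_exp_smul (A : Matrix (Fin n) (Fin n) ℝ) :
    Continuous fun t : ℝ => exp (t • A) :=
  exp_continuous.comp (continuous_id.smul continuous_const)

lemma continuous_entry (A N : Matrix (Fin n) (Fin n) ℝ) (i j : Fin n) :
    Continuous fun t : ℝ => (exp (t • Aᵀ) * N * exp (t • A)) i j := by
  have h : Continuous fun t : ℝ => exp (t • Aᵀ) * N * exp (t • A) :=
    ((continuous_exp_smul Aᵀ).mul continuous_const).mul (continuous_exp_smul A)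
  exact ((continuous_apply j).comp ((continuous_apply i).comp h))

noncomputable def entryCLM' (i j : Fin n) : Matrix (Fin n) (Fin n) ℝ →L[ℝ] ℝ :=
  LinearMap.toContinuousLinearMap
    { toFun := fun M => M i j
      map_add' := fun _ _ => rfl
      map_smul' := fun _ _ => rfl }

lemma hasDerivAt_entry (A N : Matrix (Fin n) (Fin n) ℝ) (i j : Fin n) (σ : ℝ) :
    HasDerivAt (fun t : ℝ => (exp (t • Aᵀ) * N * exp (t • A)) i j)
      ((Aᵀ * (exp (σ • Aᵀ) * N * exp (σ • A)) +
        (exp (σ • Aᵀ) * N * exp (σ • A)) * A) i j) σ := by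
  have h1 := hasDerivAt_exp_smul_const' (𝕂 := ℝ) Aᵀ σ
  have h2 := hasDerivAt_exp_smul_const (𝕂 := ℝ) A σ
  have h3 := (h1.mul (hasDerivAt_const σ N)).mul h2
  have h4 : HasDerivAt (fun t : ℝ => exp (t • Aᵀ) * N * exp (t • A))
      (Aᵀ * (exp (σ • Aᵀ) * N * exp (σ • A)) +
        (exp (σ • Aᵀ) * N * exp (σ • A)) * A) σ := by
    exact h3.congr_deriv (by simp only [mul_zero, add_zero, Pi.mul_apply]; noncomm_ring)
  exact (entryCLM' i j).hasFDerivAt.comp_hasDerivAt σ h4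

end Aux

attribute [local instance] Matrix.normedAddCommGroup Matrix.normedSpace

/-- For a real Hurwitz matrix `A` and any real matrix `N`, the function
`σ ↦ exp(σ Aᵀ) * N * exp(σ A)` is integrable on `[0, ∞)`, and its integral `P` satisfies the
Lyapunov equation `P * A + Aᵀ * P = -N`. -/
theorem integrableOn_exp_conj_and_lyapunov (n : ℕ)
    (A N : Matrix (Fin n) (Fin n) ℝ)
    (hA : ∀ μ ∈ spectrum ℂ (A.map Complex.ofReal), μ.re < 0) :
    @IntegrableOn _ _ _ _ SeminormedAddGroup.toContinuousENorm
      (fun σ : ℝ => NormedSpace.exp (σ • Aᵀ) * N * NormedSpace.exp (σ • A))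
      (Set.Ici 0) volume ∧
    (∫ σ : ℝ in Set.Ici 0,
        NormedSpace.exp (σ • Aᵀ) * N * NormedSpace.exp (σ • A)) * A +
      Aᵀ * (∫ σ : ℝ in Set.Ici 0,
        NormedSpace.exp (σ • Aᵀ) * N * NormedSpace.exp (σ • A)) = -N := by
  classical
  letI : ContinuousENorm (Matrix (Fin n) (Fin n) ℝ) := SeminormedAddGroup.toContinuousENorm
  haveI : TopologicalSpace.PseudoMetrizableSpace (Matrix (Fin n) (Fin n) ℝ) :=
    inferInstanceAs (TopologicalSpace.PseudoMetrizableSpace (Fin n → Fin n → ℝ))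
  set f : ℝ → Matrix (Fin n) (Fin n) ℝ :=
    fun σ => NormedSpace.exp (σ • Aᵀ) * N * NormedSpace.exp (σ • A) with hf
  obtain ⟨CA, hCA, αA, hαA, hdA⟩ := exp_entry_decay A hA
  have hAT : ∀ μ ∈ spectrum ℂ (Aᵀ.map Complex.ofReal), μ.re < 0 := by
    intro μ hμ
    apply hA
    rwa [Matrix.transpose_map, spectrum_transpose] at hμ
  obtain ⟨CT, hCT, αT, hαT, hdT⟩ := exp_entry_decay Aᵀ hAT
  set β : ℝ := αT + αA with hβdef
  have hβ : 0 < β := by positivity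
  set SN : ℝ := ∑ k, ∑ l, |N k l| with hSN
  have hSN0 : 0 ≤ SN :=
    Finset.sum_nonneg fun k _ => Finset.sum_nonneg fun l _ => abs_nonneg _
  set K : ℝ := CT * CA * SN with hK
  have hK0 : 0 ≤ K := by positivity
  have hexpsplit : ∀ σ : ℝ, Real.exp (-β * σ) = Real.exp (-αT * σ) * Real.exp (-αA * σ) := by
    intro σ; rw [← Real.exp_add]; congr 1; rw [hβdef]; ring
  have habs : ∀ σ : ℝ, 0 ≤ σ → ∀ i j, |f σ i j| ≤ K * Real.exp (-β * σ) := by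
    intro σ hσ i j
    have step1 : |f σ i j| ≤
        ∑ l, ∑ k, |NormedSpace.exp (σ • Aᵀ) i k| * |N k l| *
          |NormedSpace.exp (σ • A) l j| := by
      rw [hf]
      show |(NormedSpace.exp (σ • Aᵀ) * N * NormedSpace.exp (σ • A)) i j| ≤ _
      rw [Matrix.mul_apply]
      refine (Finset.abs_sum_le_sum_abs _ _).trans ?_
      refine Finset.sum_le_sum fun l _ => ?_
      rw [abs_mul, Matrix.mul_apply]
      calc |∑ k, NormedSpace.exp (σ • Aᵀ) i k * N k l| * |NormedSpace.exp (σ • A) l j|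
          ≤ (∑ k, |NormedSpace.exp (σ • Aᵀ) i k * N k l|) *
            |NormedSpace.exp (σ • A) l j| := by
            apply mul_le_mul_of_nonneg_right (Finset.abs_sum_le_sum_abs _ _) (abs_nonneg _)
        _ = ∑ k, |NormedSpace.exp (σ • Aᵀ) i k| * |N k l| *
            |NormedSpace.exp (σ • A) l j| := by
            rw [Finset.sum_mul]
            exact Finset.sum_congr rfl fun k _ => by rw [abs_mul]
    have step2 : (∑ l, ∑ k, |NormedSpace.exp (σ • Aᵀ) i k| * |N k l| *
          |NormedSpace.exp (σ • A) l j|) ≤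
        ∑ l, ∑ k, (CT * Real.exp (-αT * σ)) * |N k l| * (CA * Real.exp (-αA * σ)) := by
      refine Finset.sum_le_sum fun l _ => Finset.sum_le_sum fun k _ => ?_
      have h1 := hdT σ hσ i k
      have h2 := hdA σ hσ l j
      have hN0 : (0:ℝ) ≤ |N k l| := abs_nonneg _
      have e1 : (0:ℝ) < Real.exp (-αT * σ) := Real.exp_pos _
      have e2 : (0:ℝ) < Real.exp (-αA * σ) := Real.exp_pos _
      refine mul_le_mul (mul_le_mul h1 le_rfl hN0 (by positivity)) h2 (abs_nonneg _)
        (by positivity)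
    have step3 : (∑ l, ∑ k, (CT * Real.exp (-αT * σ)) * |N k l| * (CA * Real.exp (-αA * σ)))
        = K * Real.exp (-β * σ) := by
      rw [hexpsplit σ]
      have : ∀ l, ∑ k, (CT * Real.exp (-αT * σ)) * |N k l| * (CA * Real.exp (-αA * σ))
          = (CT * Real.exp (-αT * σ) * (CA * Real.exp (-αA * σ))) * ∑ k, |N k l| := by
        intro l
        rw [Finset.mul_sum]
        exact Finset.sum_congr rfl fun k _ => by ring
      rw [Finset.sum_congr rfl fun l _ => this l, ← Finset.mul_sum, hK, hSN,
        Finset.sum_comm]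
      ring
    exact step1.trans (step2.trans_eq step3)
  -- continuity and measurability
  have hcont_entry : ∀ i j, Continuous fun σ : ℝ => f σ i j := by
    intro i j
    exact continuous_entry A N i j
  have hcont : Continuous f := continuous_matrix hcont_entry
  -- integrability
  have hg_int : IntegrableOn (fun σ : ℝ => K * Real.exp (-β * σ)) (Set.Ici 0) := by
    rw [integrableOn_Ici_iff_integrableOn_Ioi]
    exact (exp_neg_integrableOn_Ioi 0 hβ).const_mul K
  have hnorm_le : ∀ σ ∈ Set.Ici (0:ℝ), ‖f σ‖ ≤ K * Real.exp (-β * σ) := by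
    intro σ hσ
    rw [Matrix.norm_le_iff (by positivity)]
    intro i j
    rw [Real.norm_eq_abs]
    exact habs σ hσ i j
  have h_int : IntegrableOn f (Set.Ici 0) := by
    refine Integrable.mono' hg_int hcont.aestronglyMeasurable.restrict ?_
    rw [ae_restrict_iff' measurableSet_Ici]
    exact Filter.Eventually.of_forall hnorm_le
  refine ⟨h_int, ?_⟩
  -- entry CLM
  set P : Matrix (Fin n) (Fin n) ℝ := ∫ σ in Set.Ici (0:ℝ), f σ with hP
  let E : Fin n → Fin n → (Matrix (Fin n) (Fin n) ℝ →L[ℝ] ℝ) := fun i j =>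
    LinearMap.toContinuousLinearMap
      { toFun := fun M => M i j
        map_add' := fun _ _ => rfl
        map_smul' := fun _ _ => rfl }
  have hPentry : ∀ i j, P i j = ∫ σ in Set.Ici (0:ℝ), f σ i j := by
    intro i j
    exact ((E i j).integral_comp_comm h_int).symm
  have hentry_int : ∀ i j, Integrable (fun σ => f σ i j)
      (volume.restrict (Set.Ici 0)) := by
    intro i j
    exact (E i j).integrable_comp h_int
  -- the two integrands
  have hint_right : ∀ i j, Integrable (fun σ => (f σ * A) i j)
      (volume.restrict (Set.Ici 0)) := by
    intro i j
    have : (fun σ => (f σ * A) i j) = fun σ => ∑ k, f σ i k * A k j := by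
      funext σ; rw [Matrix.mul_apply]
    rw [this]
    exact integrable_finset_sum _ fun k _ => (hentry_int i k).mul_const _
  have hint_left : ∀ i j, Integrable (fun σ => (Aᵀ * f σ) i j)
      (volume.restrict (Set.Ici 0)) := by
    intro i j
    have : (fun σ => (Aᵀ * f σ) i j) = fun σ => ∑ k, Aᵀ i k * f σ k j := by
      funext σ; rw [Matrix.mul_apply]
    rw [this]
    exact integrable_finset_sum _ fun k _ => (hentry_int k j).const_mul _
  -- tendsto 0 at top
  have htend : ∀ i j, Filter.Tendsto (fun σ => f σ i j) Filter.atTop (nhds 0) := by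
    intro i j
    have hg : Filter.Tendsto (fun σ : ℝ => K * Real.exp (-β * σ)) Filter.atTop (nhds 0) := by
      have : Filter.Tendsto (fun σ : ℝ => Real.exp (-β * σ)) Filter.atTop (nhds 0) := by
        have h1 : Filter.Tendsto (fun σ : ℝ => β * σ) Filter.atTop Filter.atTop :=
          Filter.Tendsto.const_mul_atTop hβ Filter.tendsto_id
        have h2 := Real.tendsto_exp_neg_atTop_nhds_zero.comp h1
        simpa [Function.comp_def, neg_mul] using h2
      simpa using this.const_mul K
    refine squeeze_zero_norm' ?_ hg
    filter_upwards [Filter.eventually_ge_atTop (0:ℝ)] with σ hσ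
    rw [Real.norm_eq_abs]
    exact habs σ hσ i j
  -- f 0 = N
  have hf0 : ∀ i j, f 0 i j = N i j := by
    intro i j
    rw [hf]
    simp [NormedSpace.exp_zero]
  -- FTC entrywise
  have hFTC : ∀ i j, (∫ σ in Set.Ici (0:ℝ), ((Aᵀ * f σ) i j + (f σ * A) i j)) = -(N i j) := by
    intro i j
    rw [MeasureTheory.integral_Ici_eq_integral_Ioi]
    have := MeasureTheory.integral_Ioi_of_hasDerivAt_of_tendsto
      (f := fun σ => f σ i j)
      (f' := fun σ => (Aᵀ * f σ) i j + (f σ * A) i j) (a := 0) (m := 0)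
      ((hcont_entry i j).continuousWithinAt)
      (fun x _ => by
        have h := hasDerivAt_entry A N i j x
        rwa [Matrix.add_apply] at h)
      (by
        rw [← integrableOn_Ici_iff_integrableOn_Ioi]
        exact (hint_left i j).add (hint_right i j))
      (htend i j)
    rw [this]
    show 0 - f 0 i j = -(N i j)
    rw [hf0 i j, zero_sub]
  -- assemble
  ext i j
  rw [Matrix.add_apply, Matrix.neg_apply, Matrix.mul_apply, Matrix.mul_apply]
  have hPA : ∑ k, P i k * A k j = ∫ σ in Set.Ici (0:ℝ), (f σ * A) i j := by
    have h1 : ∀ k, P i k * A k j = ∫ σ in Set.Ici (0:ℝ), f σ i k * A k j := by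
      intro k
      rw [hPentry i k, ← integral_mul_const]
    rw [Finset.sum_congr rfl fun k _ => h1 k, ← integral_finset_sum _
      (fun k _ => (hentry_int i k).mul_const _)]
    simp only [Matrix.mul_apply]
  have hAP : ∑ k, Aᵀ i k * P k j = ∫ σ in Set.Ici (0:ℝ), (Aᵀ * f σ) i j := by
    have h1 : ∀ k, Aᵀ i k * P k j = ∫ σ in Set.Ici (0:ℝ), Aᵀ i k * f σ k j := by
      intro k
      rw [hPentry k j, ← integral_const_mul]
    rw [Finset.sum_congr rfl fun k _ => h1 k, ← integral_finset_sum _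
      (fun k _ => (hentry_int k j).const_mul _)]
    simp only [Matrix.mul_apply]
  rw [hPA, hAP, ← integral_add (hint_right i j) (hint_left i j)]
  rw [← hFTC i j]
  congr 1
  funext σ
  ring
end

section
/- If A is an n×n real Hurwitz matrix, then exp(t·A) tends to the zero matrix as t → ∞. -/
open scoped Matrix
open Filter

attribute [local instance] Matrix.normedAddCommGroup Matrix.normedSpace

section Aux

open Matrix NormedSpace

attribute [local instance] Matrix.linftyOpNormedRing Matrix.linftyOpNormedAlgebra

private lemma hurwitz_aux_scalar (μ : ℂ) (hμ : μ.re < 0) (j : ℕ) :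
    Tendsto (fun t : ℝ => Complex.exp (t • μ) * (t:ℂ)^j) atTop (nhds 0) := by
  rw [tendsto_zero_iff_norm_tendsto_zero]
  have hb : (0:ℝ) < -μ.re := by linarith
  have h2 := Real.tendsto_pow_mul_exp_neg_atTop_nhds_zero j
  have h3 : Tendsto (fun t : ℝ => (-μ.re) * t) atTop atTop :=
    Tendsto.const_mul_atTop hb tendsto_id
  have h4 := (h2.comp h3).const_mul (((-μ.re)^j)⁻¹)
  rw [mul_zero] at h4
  apply h4.congr'
  filter_upwards [eventually_ge_atTop (0:ℝ)] with t ht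
  have habs : ‖Complex.exp (t • μ)‖ = Real.exp (μ.re * t) := by
    rw [Complex.norm_exp]; norm_num [Complex.real_smul, mul_comm]
  have hbj : ((-μ.re)^j) ≠ 0 := by positivity
  simp only [Function.comp, norm_mul, habs, norm_pow, Complex.norm_real, Real.norm_eq_abs,
    abs_of_nonneg ht, mul_pow, neg_mul, neg_neg]
  field_simp
  ring

private lemma hurwitz_aux_split {n : ℕ} (B : Matrix (Fin n) (Fin n) ℂ) (μ : ℂ) (t : ℝ) :
    exp (t • B) = Complex.exp (t • μ) • exp (t • (B - μ • 1)) := by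
  have hsplit : t • B = (t • μ) • (1 : Matrix (Fin n) (Fin n) ℂ) + t • (B - μ • 1) := by
    rw [smul_sub, smul_assoc]; module
  rw [hsplit, Matrix.exp_add_of_commute _ _ (((Commute.one_left _).smul_left _).smul_right _)]
  have hc : algebraMap ℂ (Matrix (Fin n) (Fin n) ℂ) (exp (t • μ)) = exp (algebraMap ℂ (Matrix (Fin n) (Fin n) ℂ) (t • μ)) := by
    with_unfolding_all exact NormedSpace.algebraMap_exp_comm (t • μ)
  rw [← Algebra.algebraMap_eq_smul_one (t • μ), ← hc,
    Algebra.algebraMap_eq_smul_one, Complex.exp_eq_exp_ℂ, smul_mul_assoc, one_mul]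

private lemma hurwitz_aux_nilp {n : ℕ} (N : Matrix (Fin n) (Fin n) ℂ) (v : Fin n → ℂ) (k : ℕ)
    (hk : N ^ k *ᵥ v = 0) (t : ℝ) :
    exp (t • N) *ᵥ v
      = ∑ j ∈ Finset.range k, ((t:ℂ)^j * (j.factorial :ℂ)⁻¹) • (N ^ j *ᵥ v) := by
  classical
  let φ : Matrix (Fin n) (Fin n) ℂ →ₗ[ℂ] (Fin n → ℂ) :=
    { toFun := fun M => M *ᵥ v
      map_add' := fun M₁ M₂ => Matrix.add_mulVec _ _ _
      map_smul' := fun c M => by simpa using Matrix.smul_mulVec c M v }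
  have φc : Continuous φ := LinearMap.continuous_of_finiteDimensional φ
  haveI : @CompleteSpace (Matrix (Fin n) (Fin n) ℂ) (@PseudoMetricSpace.toUniformSpace _ (@SeminormedRing.toPseudoMetricSpace _ (@NormedRing.toSeminormedRing _ Matrix.linftyOpNormedRing))) := by
    with_unfolding_all exact (inferInstanceAs (CompleteSpace (Fin n → Fin n → ℂ)))
  have h1 : HasSum (fun j : ℕ => φ ((j.factorial :ℂ)⁻¹ • (t • N) ^ j)) (φ (exp (t • N))) := by
    with_unfolding_all exact (NormedSpace.exp_series_hasSum_exp' (𝕂 := ℂ) (t • N)).map φ.toAddMonoidHom φc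
  have hterm : ∀ j : ℕ, φ ((j.factorial :ℂ)⁻¹ • (t • N) ^ j)
      = ((t:ℂ)^j * (j.factorial :ℂ)⁻¹) • (N ^ j *ᵥ v) := by
    intro j
    rw [smul_pow, ← Complex.coe_smul (t^j), _root_.map_smul, _root_.map_smul]
    show ((j.factorial :ℂ)⁻¹) • (((t^j : ℝ):ℂ) • (N ^ j *ᵥ v)) = _
    rw [smul_smul]
    push_cast
    ring_nf
  have hzero : ∀ j ∉ Finset.range k, φ ((j.factorial :ℂ)⁻¹ • (t • N) ^ j) = 0 := by
    intro j hj
    rw [hterm j]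
    have : N ^ j *ᵥ v = 0 := by
      rw [Finset.mem_range, not_lt] at hj
      rw [← Nat.sub_add_cancel hj, pow_add, ← Matrix.mulVec_mulVec, hk, Matrix.mulVec_zero]
    rw [this, smul_zero]
  have h2 := hasSum_sum_of_ne_finset_zero (L := SummationFilter.unconditional ℕ) hzero
  have h3 := h1.unique h2
  rw [show exp (t • N) *ᵥ v = φ (exp (t • N)) from rfl, h3]
  exact Finset.sum_congr rfl fun j _ => hterm j

private lemma hurwitz_aux_vec {n : ℕ} (B : Matrix (Fin n) (Fin n) ℂ)
    (hB : ∀ μ ∈ spectrum ℂ B, μ.re < 0) (v : Fin n → ℂ) :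
    Tendsto (fun t : ℝ => exp (t • B) *ᵥ v) atTop (nhds 0) := by
  classical
  set f : Module.End ℂ (Fin n → ℂ) := Matrix.toLinAlgEquiv' B with hf
  let S : Submodule ℂ (Fin n → ℂ) :=
    { carrier := {w | Tendsto (fun t : ℝ => exp (t • B) *ᵥ w) atTop (nhds 0)}
      add_mem' := fun {a b} ha hb => by
        have := ha.add hb
        simpa [Matrix.mulVec_add] using this
      zero_mem' := by simp [Matrix.mulVec_zero]
      smul_mem' := fun c a ha => by
        have := ha.const_smul c
        simpa [Matrix.mulVec_smul] using this }
  suffices h : ∀ μ, f.maxGenEigenspace μ ≤ S by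
    have htop : (⊤ : Submodule ℂ (Fin n → ℂ)) ≤ S := by
      rw [← Module.End.iSup_maxGenEigenspace_eq_top f]
      exact iSup_le h
    exact htop (Submodule.mem_top)
  intro μ w hw
  rcases eq_or_ne w 0 with rfl | hw0
  · exact S.zero_mem
  have hμ : μ.re < 0 := by
    apply hB μ
    rw [← AlgEquiv.spectrum_eq (Matrix.toLinAlgEquiv' (R := ℂ) (n := Fin n)) B]
    obtain ⟨k, hk⟩ := (Module.End.mem_maxGenEigenspace f μ w).mp hw
    refine Module.End.HasEigenvalue.mem_spectrum
      (Module.End.hasEigenvalue_of_hasGenEigenvalue (k := k) ?_)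
    intro hbot
    refine hw0 ?_
    have : w ∈ (f.genEigenspace μ) k := by
      rw [Module.End.mem_genEigenspace_nat]; exact hk
    rw [hbot] at this
    simpa using this
  obtain ⟨k, hk⟩ := (Module.End.mem_maxGenEigenspace f μ w).mp hw
  have hkB : (B - μ • 1) ^ k *ᵥ w = 0 := by
    have h1 : f - μ • 1 = Matrix.toLinAlgEquiv' (B - μ • (1 : Matrix (Fin n) (Fin n) ℂ)) := by
      rw [map_sub, hf, _root_.map_smul, _root_.map_one]
    have h2 : ((f - μ • 1) ^ k) w = Matrix.toLinAlgEquiv' ((B - μ • 1) ^ k) w := by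
      rw [h1, ← map_pow]
    rw [h2, Matrix.toLinAlgEquiv'_apply] at hk
    exact hk
  show Tendsto (fun t : ℝ => exp (t • B) *ᵥ w) atTop (nhds 0)
  have key : ∀ t : ℝ, exp (t • B) *ᵥ w
      = ∑ j ∈ Finset.range k,
          (Complex.exp (t • μ) * ((t:ℂ)^j * (j.factorial :ℂ)⁻¹)) • ((B - μ • 1) ^ j *ᵥ w) := by
    intro t
    rw [hurwitz_aux_split B μ t, Matrix.smul_mulVec,
      hurwitz_aux_nilp (B - μ • 1) w k hkB t, Finset.smul_sum]
    exact Finset.sum_congr rfl fun j _ => by rw [smul_smul]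
  rw [tendsto_congr key]
  rw [show (0 : Fin n → ℂ) = ∑ j ∈ Finset.range k, (0 : Fin n → ℂ) by simp]
  refine tendsto_finset_sum _ fun j _ => ?_
  have h1 := hurwitz_aux_scalar μ hμ j
  have h2 := (h1.mul_const ((j.factorial :ℂ)⁻¹)).smul_const ((B - μ • 1) ^ j *ᵥ w)
  simpa [mul_assoc] using h2

private lemma hurwitz_aux_map {n : ℕ} (A : Matrix (Fin n) (Fin n) ℝ) (t : ℝ) :
    (NormedSpace.exp (t • A)).map (Complex.ofReal) = exp (t • A.map Complex.ofReal) := by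
  have hcont : Continuous (fun M : Matrix (Fin n) (Fin n) ℝ => M.map Complex.ofReal) := by
    apply continuous_pi; intro i; apply continuous_pi; intro j
    exact Complex.continuous_ofReal.comp ((continuous_apply j).comp (continuous_apply i))
  haveI : @CompleteSpace (Matrix (Fin n) (Fin n) ℝ) (@PseudoMetricSpace.toUniformSpace _ (@SeminormedRing.toPseudoMetricSpace _ (@NormedRing.toSeminormedRing _ Matrix.linftyOpNormedRing))) := by
    with_unfolding_all exact (inferInstanceAs (CompleteSpace (Fin n → Fin n → ℝ)))
  have h1 : (RingHom.mapMatrix (m := Fin n) Complex.ofRealHom) (exp (t • A)) = exp ((RingHom.mapMatrix (m := Fin n) Complex.ofRealHom) (t • A)) := by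
    with_unfolding_all exact NormedSpace.map_exp (RingHom.mapMatrix (m := Fin n) Complex.ofRealHom) hcont (t • A)
  have h2 : (RingHom.mapMatrix (m := Fin n) Complex.ofRealHom) (t • A) = t • A.map Complex.ofReal := by
    ext i j
    simp [Complex.real_smul]
  rw [RingHom.mapMatrix_apply] at h1
  rw [show (Complex.ofReal : ℝ → ℂ) = ⇑Complex.ofRealHom from rfl, h1, h2]
  rfl

end Aux

/-- If `A` is a real Hurwitz matrix (every eigenvalue over `ℂ` has negative
real part), then `exp (t • A)` tends to the zero matrix as `t → ∞`. -/
theorem exp_smul_tendsto_zero_of_hurwitz (n : ℕ)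
    (A : Matrix (Fin n) (Fin n) ℝ)
    (hA : ∀ μ ∈ spectrum ℂ (A.map Complex.ofReal), μ.re < 0) :
    Tendsto (fun t : ℝ => NormedSpace.exp (t • A)) atTop
      (nhds (0 : Matrix (Fin n) (Fin n) ℝ)) := by
  classical
  refine tendsto_pi_nhds.mpr ?_
  intro i
  rw [tendsto_pi_nhds]
  intro j
  have hvec := hurwitz_aux_vec (A.map Complex.ofReal) hA (Pi.single j 1)
  have hentry : Tendsto (fun t : ℝ =>
      NormedSpace.exp (t • A.map Complex.ofReal) i j) atTop (nhds 0) := by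
    have := (continuous_apply i).continuousAt.tendsto.comp hvec
    apply this.congr
    intro t
    simp [Matrix.mulVec_single]
  have hre := (Complex.continuous_re.tendsto 0).comp hentry
  apply hre.congr
  intro t
  have := congrFun (congrFun (hurwitz_aux_map A t) i) j
  simp only [Matrix.map_apply] at this
  rw [Function.comp_apply, ← this, Complex.ofReal_re]
end

section
/- Let P, A, N̂ be n×n real matrices, B an n×p real matrix, C a p×n real matrix, W an n×p real matrix, and M, ψ p×p real matrices with ψᵀ = ψ. Assume P·A + Aᵀ·P = −N̂ᵀ·N̂, P·B = −N̂ᵀ·W + Aᵀ·Cᵀ·ψ + Cᵀ, and Wᵀ·W = ψ·C·B + 2·M + Bᵀ·Cᵀ·ψ. Then for all vectors x ∈ ℝⁿ and φ ∈ ℝᵖ: (1/2)·xᵀ·(P·A + Aᵀ·P)·x − xᵀ·P·B·φ + φᵀ·ψ·C·(A·x − B·φ) = −(1/2)·(N̂·x − W·φ)ᵀ·(N̂·x − W·φ) − φᵀ·(C·x − M·φ). -/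
open scoped Matrix


private lemma tkey {m k : Type*} [Fintype m] [Fintype k] (Q : Matrix m k ℝ) (x : k → ℝ) (y : m → ℝ) :
    x ⬝ᵥ Qᵀ.mulVec y = y ⬝ᵥ Q.mulVec x := by
  rw [Matrix.mulVec_transpose, dotProduct_comm, Matrix.dotProduct_mulVec]


/-- With `P·A + Aᵀ·P = −N̂ᵀ·N̂`, `P·B = −N̂ᵀ·W + Aᵀ·Cᵀ·ψ + Cᵀ`,
`Wᵀ·W = ψ·C·B + 2·M + Bᵀ·Cᵀ·ψ` (and `ψ` symmetric), for all vectors `x ∈ ℝⁿ`, `φ ∈ ℝᵖ`: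
`(1/2) xᵀ (PA + AᵀP) x − xᵀ P B φ + φᵀ ψ C (A x − B φ)
  = −(1/2) (N̂ x − W φ)ᵀ (N̂ x − W φ) − φᵀ (C x − M φ)`. -/
theorem quadratic_lyapunov_completion_identity (n p : ℕ)
    (P A Nhat : Matrix (Fin n) (Fin n) ℝ)
    (B : Matrix (Fin n) (Fin p) ℝ) (C : Matrix (Fin p) (Fin n) ℝ)
    (W : Matrix (Fin n) (Fin p) ℝ) (M ψ : Matrix (Fin p) (Fin p) ℝ)
    (hψ : ψᵀ = ψ)
    (h1 : P * A + Aᵀ * P = -(Nhatᵀ * Nhat))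
    (h2 : P * B = -(Nhatᵀ * W) + Aᵀ * Cᵀ * ψ + Cᵀ)
    (h3 : Wᵀ * W = ψ * C * B + (2 : ℝ) • M + Bᵀ * Cᵀ * ψ) :
    ∀ (x : Fin n → ℝ) (φ : Fin p → ℝ),
      (1 / 2 : ℝ) * (x ⬝ᵥ (P * A + Aᵀ * P).mulVec x)
          - x ⬝ᵥ (P * B).mulVec φ
          + φ ⬝ᵥ (ψ * C).mulVec (A.mulVec x - B.mulVec φ) =
        -((1 / 2 : ℝ) * ((Nhat.mulVec x - W.mulVec φ) ⬝ᵥ (Nhat.mulVec x - W.mulVec φ)))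
          - φ ⬝ᵥ (C.mulVec x - M.mulVec φ) := by
  intro x φ
  have symψ : ∀ (u v : Fin p → ℝ), u ⬝ᵥ ψ.mulVec v = v ⬝ᵥ ψ.mulVec u := by
    intro u v; rw [← hψ, tkey, hψ]
  have e3 := congrArg (fun Q => φ ⬝ᵥ Q.mulVec φ) h3
  rw [h1, h2]
  simp only [Matrix.add_mulVec, Matrix.neg_mulVec, Matrix.mulVec_sub, Matrix.sub_mulVec,
    Matrix.smul_mulVec, ← Matrix.mulVec_mulVec, dotProduct_add, dotProduct_sub,
    dotProduct_neg, dotProduct_smul] at e3 ⊢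
  have hs1 : x ⬝ᵥ Aᵀ.mulVec (Cᵀ.mulVec (ψ.mulVec φ)) = φ ⬝ᵥ ψ.mulVec (C.mulVec (A.mulVec x)) := by
    rw [tkey, dotProduct_comm, tkey, dotProduct_comm, symψ]
  have hs2 : x ⬝ᵥ Cᵀ.mulVec φ = φ ⬝ᵥ C.mulVec x := tkey C x φ
  have hs3 : x ⬝ᵥ Nhatᵀ.mulVec (W.mulVec φ) = (Nhat.mulVec x) ⬝ᵥ (W.mulVec φ) := by
    rw [tkey, dotProduct_comm]
  have hs4 : φ ⬝ᵥ Bᵀ.mulVec (Cᵀ.mulVec (ψ.mulVec φ)) = φ ⬝ᵥ ψ.mulVec (C.mulVec (B.mulVec φ)) := by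
    rw [tkey, dotProduct_comm, tkey, dotProduct_comm, symψ]
  have hs5 : x ⬝ᵥ Nhatᵀ.mulVec (Nhat.mulVec x) = (Nhat.mulVec x) ⬝ᵥ (Nhat.mulVec x) := by
    rw [tkey, dotProduct_comm]
  have hs6 : φ ⬝ᵥ Wᵀ.mulVec (W.mulVec φ) = (W.mulVec φ) ⬝ᵥ (W.mulVec φ) := by
    rw [tkey, dotProduct_comm]
  have hs7 : (W.mulVec φ) ⬝ᵥ (Nhat.mulVec x) = (Nhat.mulVec x) ⬝ᵥ (W.mulVec φ) :=
    dotProduct_comm _ _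
  simp only [sub_dotProduct, dotProduct_sub, smul_eq_mul] at *
  linarith [e3, hs1, hs2, hs3, hs4, hs5, hs6, hs7]
end

section
/- Let a > 0, k > 0, β > 0, and γ ≥ 0 be real numbers. Then for every ω ∈ ℝ, the complex number (1/k + (1 − γ·a)·β/(a + i·ω) + γ·β) + (1/k + (1 − γ·a)·β/(a − i·ω) + γ·β) equals the real number 2/k + 2·β·(a + γ·ω²)/(a² + ω²), and this real number is strictly positive. -/
/-- For real `a > 0`, `k > 0`, `β > 0`, `γ ≥ 0` and every `ω ∈ ℝ`, the sum
`(1/k + (1 − γa)β/(a + iω) + γβ) + (1/k + (1 − γa)β/(a − iω) + γβ)` equals the real number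
`2/k + 2β(a + γω²)/(a² + ω²)`, and this real number is strictly positive. -/
theorem transfer_function_real_part_positive (a k β γ : ℝ)
    (ha : 0 < a) (hk : 0 < k) (hβ : 0 < β) (hγ : 0 ≤ γ) (ω : ℝ) :
    ((1 / (k : ℂ) + (1 - (γ : ℂ) * a) * β / ((a : ℂ) + ω * Complex.I) + (γ : ℂ) * β) +
        (1 / (k : ℂ) + (1 - (γ : ℂ) * a) * β / ((a : ℂ) - ω * Complex.I) + (γ : ℂ) * β)) =
      ((2 / k + 2 * β * (a + γ * ω ^ 2) / (a ^ 2 + ω ^ 2) : ℝ) : ℂ) ∧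
      0 < 2 / k + 2 * β * (a + γ * ω ^ 2) / (a ^ 2 + ω ^ 2) := by
  have hsum : (0:ℝ) < a ^ 2 + ω ^ 2 := by positivity
  constructor
  · have hk' : (k:ℂ) ≠ 0 := by exact_mod_cast hk.ne'
    have h1 : (a : ℂ) + ω * Complex.I ≠ 0 := by
      intro h
      have := congrArg Complex.re h
      simp at this
      exact ha.ne' this
    have h2 : (a : ℂ) - ω * Complex.I ≠ 0 := by
      intro h
      have := congrArg Complex.re h
      simp at this
      exact ha.ne' this
    have hd : ((a:ℂ) ^ 2 + ω ^ 2) ≠ 0 := by exact_mod_cast hsum.ne'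
    push_cast
    field_simp
    ring_nf
    simp [Complex.I_sq]
  · have : 0 < a + γ * ω ^ 2 := by positivity
    positivity
end
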